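/- arXiv:1708.00689 — 5 statements merged into one kernel-verified Lean document; each statement's English description precedes it below -/
import Mathlib

section
/- Let K ≥ 2 be an integer and let a_1, …, a_K be fixed positive reals with a_0 = a_1 + ⋯ + a_K. Then, as t → ∞, t · [ (ψ(t·a_0 + 1) − Σ_{k=1}^K (a_k/a_0)·ψ(t·a_k + 1)) − ( −Σ_{k=1}^K (a_k/a_0)·log(a_k/a_0) − (K−1)/(2·t·a_0) ) ] → 0. In particular the posterior expected entropy ψ(t a_0 + 1) − Σ_k (a_k/a_0) ψ(t a_k + 1) of a Dirichlet distribution equals the plug-in entropy −Σ_k (a_k/a_0) log(a_k/a_0) minus (K−1)/(2 t a_0), up to an error of order o(1/t). -/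
/-!
Write `ψ(x + 1) = log x + 1 / (2x) + R(x)`. Convexity of `log ∘ Γ` traps `ψ(x + 1)` between the
secant slopes `log x` and `log (x + 1)`, so `R(x) → 0`. By `ψ(x + 1) = ψ(x) + 1 / x`, the increment
`R(x + 1) - R(x)` is the trapezoidal-rule error for `∫ₓ^{x+1} dy / y`, which the series
`log (1 + 1/x) = 2 ∑ s^(2k+1) / (2k+1)`, `s = 1 / (2x + 1)`, bounds by `1 / (2x(x+1)(2x+1))`;
summing the increments gives `|R(x)| ≤ 1 / (4x²)`. At `x = t a_k` the `log t` terms cancel since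
the weights `a_k / a_0` sum to one, and each weighted `1 / (2 t a_k)` equals `1 / (2 t a_0)`, which
produces `(K - 1) / (2 t a_0)`.
-/

open Real Filter Finset

/-- The digamma function: derivative of `log ∘ Γ`. -/
noncomputable def digamma (x : ℝ) : ℝ := deriv (fun y => Real.log (Real.Gamma y)) x

open Set

lemma abs_le_of_abs_sub_le_sub {u v : ℕ → ℝ} (hu : Tendsto u atTop (nhds 0))
    (hv : Tendsto v atTop (nhds 0)) (h : ∀ n, |u (n + 1) - u n| ≤ v n - v (n + 1)) :
    |u 0| ≤ v 0 := by
  have hpartial : ∀ n, |u n - u 0| ≤ v 0 - v n := by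
    intro n
    induction n with
    | zero => simp
    | succ n ih =>
      calc |u (n + 1) - u 0| ≤ |u (n + 1) - u n| + |u n - u 0| := abs_sub_le _ _ _
        _ ≤ v 0 - v (n + 1) := by linarith [h n]
  have hlim : Tendsto (fun n => |u n - u 0|) atTop (nhds (|0 - u 0|)) :=
    (hu.sub_const _).abs
  simpa using le_of_tendsto_of_tendsto' hlim (tendsto_const_nhds.sub hv) hpartial

lemma log_one_add_inv_eq_log_sub_log {x : ℝ} (hx : 0 < x) :
    Real.log (1 + x⁻¹) = Real.log (x + 1) - Real.log x := by
  rw [← Real.log_div (by linarith) hx.ne', add_div, div_self hx.ne', one_div, add_comm]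

lemma two_div_le_log_one_add_inv {x : ℝ} (hx : 0 < x) :
    2 / (2 * x + 1) ≤ Real.log (1 + x⁻¹) := by
  simpa [div_eq_mul_inv] using
    le_hasSum (Real.hasSum_log_one_add_inv hx) 0 fun k _ => by positivity

lemma log_one_add_inv_le {x : ℝ} (hx : 0 < x) :
    Real.log (1 + x⁻¹) ≤ (2 * x + 1) / (2 * x * (x + 1)) := by
  set s : ℝ := 1 / (2 * x + 1) with hs
  have hs0 : 0 ≤ s := by positivity
  have hs1 : s ^ 2 < 1 := by
    rw [sq_lt_one_iff_abs_lt_one, abs_of_nonneg hs0, hs, div_lt_one (by linarith)]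
    linarith
  have hgeom : HasSum (fun k : ℕ => 2 * s ^ (2 * k + 1)) (2 * s * (1 - s ^ 2)⁻¹) := by
    simpa only [← pow_mul, mul_assoc, ← pow_succ'] using
      (hasSum_geometric_of_lt_one (sq_nonneg s) hs1).mul_left (2 * s)
  refine (hasSum_le (fun k => ?_) (Real.hasSum_log_one_add_inv hx) hgeom).trans_eq ?_
  · have : 1 / (2 * (k : ℝ) + 1) ≤ 1 :=
      div_le_one_of_le₀ (by linarith [k.cast_nonneg (α := ℝ)]) (by positivity)
    have : 0 ≤ s ^ (2 * k + 1) := by positivity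
    nlinarith
  · rw [hs, div_pow, one_pow, one_sub_div (by positivity),
      show (2 * x + 1) ^ 2 - 1 = 4 * x * (x + 1) by ring]
    field_simp
    ring

lemma differentiableAt_log_Gamma {x : ℝ} (hx : 0 < x) :
    DifferentiableAt ℝ (fun y => Real.log (Real.Gamma y)) x :=
  (Real.differentiableAt_Gamma fun m => by linarith [(m.cast_nonneg : (0 : ℝ) ≤ m)]).log
    (Real.Gamma_pos_of_pos hx).ne'

lemma log_Gamma_add_one {x : ℝ} (hx : 0 < x) :
    Real.log (Real.Gamma (x + 1)) = Real.log (Real.Gamma x) + Real.log x := by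
  rw [Real.Gamma_add_one hx.ne', Real.log_mul hx.ne' (Real.Gamma_pos_of_pos hx).ne', add_comm]

lemma digamma_add_one {x : ℝ} (hx : 0 < x) : digamma (x + 1) = digamma x + x⁻¹ := by
  rw [digamma, digamma, ← deriv_comp_add_const, ← Real.deriv_log,
    ← deriv_add (differentiableAt_log_Gamma hx) (Real.differentiableAt_log hx.ne')]
  refine Filter.EventuallyEq.deriv_eq ?_
  filter_upwards [eventually_gt_nhds hx] with y hy using log_Gamma_add_one hy

lemma log_le_digamma_add_one {x : ℝ} (hx : 0 < x) : Real.log x ≤ digamma (x + 1) := by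
  refine le_of_eq ?_ |>.trans <| Real.convexOn_log_Gamma.slope_le_deriv (mem_Ioi.mpr hx)
    (mem_Ioi.mpr (by linarith)) (by linarith) (differentiableAt_log_Gamma (by linarith))
  rw [slope_def_field, Function.comp_apply, Function.comp_apply, log_Gamma_add_one hx]
  ring

lemma digamma_add_one_le_log_add_one {x : ℝ} (hx : 0 < x) :
    digamma (x + 1) ≤ Real.log (x + 1) := by
  refine Real.convexOn_log_Gamma.deriv_le_slope (mem_Ioi.mpr (by linarith))
    (mem_Ioi.mpr (by linarith : (0 : ℝ) < x + 1 + 1)) (by linarith)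
    (differentiableAt_log_Gamma (by linarith)) |>.trans (le_of_eq ?_)
  rw [slope_def_field, Function.comp_apply, Function.comp_apply,
    log_Gamma_add_one (by linarith : (0 : ℝ) < x + 1)]
  ring

noncomputable def digammaRemainder (x : ℝ) : ℝ := digamma (x + 1) - Real.log x - 1 / (2 * x)

lemma abs_digammaRemainder_le {x : ℝ} (hx : 0 < x) : |digammaRemainder x| ≤ 1 / (2 * x) := by
  have hlower := log_le_digamma_add_one hx
  have hupper := digamma_add_one_le_log_add_one hx
  have hlog := log_one_add_inv_le hx
  rw [log_one_add_inv_eq_log_sub_log hx] at hlog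
  have hmid : (2 * x + 1) / (2 * x * (x + 1)) = 1 / (2 * x) + 1 / (2 * (x + 1)) := by
    field_simp
    ring
  have hlt : 1 / (2 * (x + 1)) ≤ 1 / (2 * x) := by gcongr; linarith
  rw [abs_le, digammaRemainder]
  constructor <;> linarith

lemma digammaRemainder_add_one_sub {x : ℝ} (hx : 0 < x) :
    digammaRemainder (x + 1) - digammaRemainder x
      = (2 * x + 1) / (2 * x * (x + 1)) - Real.log (1 + x⁻¹) := by
  rw [digammaRemainder, digammaRemainder, digamma_add_one (by linarith),
    log_one_add_inv_eq_log_sub_log hx]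
  field_simp
  ring

lemma abs_digammaRemainder_add_one_sub_le {x : ℝ} (hx : 0 < x) :
    |digammaRemainder (x + 1) - digammaRemainder x|
      ≤ 1 / (4 * x ^ 2) - 1 / (4 * (x + 1) ^ 2) := by
  have hlower := two_div_le_log_one_add_inv hx
  have hupper := log_one_add_inv_le hx
  have hgap : (2 * x + 1) / (2 * x * (x + 1)) - 2 / (2 * x + 1)
      ≤ 1 / (4 * x ^ 2) - 1 / (4 * (x + 1) ^ 2) := by
    have hx1 : 0 < x + 1 := by linarith
    have hlhs : (2 * x + 1) / (2 * x * (x + 1)) - 2 / (2 * x + 1)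
        = 1 / (2 * x * (x + 1) * (2 * x + 1)) := by
      field_simp
      ring
    rw [hlhs, div_sub_div _ _ (by positivity) (by positivity),
      div_le_div_iff₀ (by positivity) (by positivity)]
    nlinarith [mul_pos hx hx1, mul_pos (mul_pos hx hx1) (mul_pos hx hx1)]
  rw [digammaRemainder_add_one_sub hx, abs_of_nonneg (by linarith)]
  linarith

lemma tendsto_digammaRemainder_atTop : Tendsto digammaRemainder atTop (nhds 0) := by
  refine squeeze_zero_norm' ?_
    ((tendsto_const_nhds (x := (1 : ℝ))).div_atTop (tendsto_id.const_mul_atTop two_pos))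
  filter_upwards [eventually_gt_atTop 0] with x hx
  exact abs_digammaRemainder_le hx

lemma abs_digammaRemainder_le_inv_sq {x : ℝ} (hx : 0 < x) :
    |digammaRemainder x| ≤ 1 / (4 * x ^ 2) := by
  have hshift : Tendsto (fun n : ℕ => x + n) atTop atTop :=
    tendsto_atTop_add_const_left _ x tendsto_natCast_atTop_atTop
  have hsq : Tendsto (fun y : ℝ => 1 / (4 * y ^ 2)) atTop (nhds 0) :=
    tendsto_const_nhds.div_atTop ((tendsto_pow_atTop two_ne_zero).const_mul_atTop four_pos)
  simpa using abs_le_of_abs_sub_le_sub (tendsto_digammaRemainder_atTop.comp hshift)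
    (hsq.comp hshift) fun n => by
      simpa [add_assoc] using abs_digammaRemainder_add_one_sub_le (by positivity : 0 < x + n)

lemma tendsto_mul_digammaRemainder_mul {c : ℝ} (hc : 0 < c) :
    Tendsto (fun t => t * digammaRemainder (t * c)) atTop (nhds 0) := by
  refine squeeze_zero_norm' ?_ ((tendsto_const_nhds (x := (1 : ℝ))).div_atTop
    (tendsto_id.const_mul_atTop (by positivity : 0 < 4 * c ^ 2)))
  filter_upwards [eventually_gt_atTop 0] with t ht
  calc ‖t * digammaRemainder (t * c)‖ = t * |digammaRemainder (t * c)| := by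
        rw [norm_mul, Real.norm_of_nonneg ht.le, Real.norm_eq_abs]
    _ ≤ t * (1 / (4 * (t * c) ^ 2)) := by
        gcongr
        exact abs_digammaRemainder_le_inv_sq (by positivity)
    _ = 1 / (4 * c ^ 2 * id t) := by
        rw [id]
        field_simp

lemma digamma_entropy_sub_plugin_entropy_eq {ι : Type*} [Fintype ι] [Nonempty ι] {a : ι → ℝ}
    (ha : ∀ i, 0 < a i) {a0 : ℝ} (ha0 : a0 = ∑ i, a i) {t : ℝ} (ht : 0 < t) :
    (digamma (t * a0 + 1) - ∑ i, (a i / a0) * digamma (t * a i + 1))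
        - (-∑ i, (a i / a0) * Real.log (a i / a0) - ((Fintype.card ι : ℝ) - 1) / (2 * t * a0))
      = digammaRemainder (t * a0) - ∑ i, (a i / a0) * digammaRemainder (t * a i) := by
  have ha0pos : 0 < a0 := ha0 ▸ Finset.sum_pos (fun i _ => ha i) univ_nonempty
  have hweights : ∑ i, a i / a0 = 1 := by rw [← Finset.sum_div, ← ha0, div_self ha0pos.ne']
  have hdigamma (y : ℝ) : digamma (y + 1) = digammaRemainder y + Real.log y + 1 / (2 * y) := by
    rw [digammaRemainder]
    ring
  have hterm (i : ι) : (a i / a0) * digamma (t * a i + 1) = (a i / a0) * digammaRemainder (t * a i)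
      + (a i / a0) * (Real.log (t * a0) + Real.log (a i / a0)) + 1 / (2 * t * a0) := by
    have := (ha i).ne'
    have hscale : t * a0 * (a i / a0) = t * a i := by field_simp
    rw [hdigamma, ← Real.log_mul (by positivity) (by positivity), hscale]
    field_simp
  simp only [hdigamma (t * a0), hterm, Finset.sum_add_distrib, mul_add, ← Finset.sum_mul,
    hweights, Finset.sum_const, Finset.card_univ, nsmul_eq_mul]
  ring

/-- asymptotic form of Lemma 1. -/
theorem expected_entropy_asymptotic (K : ℕ) (hK : 2 ≤ K) (a : Fin K → ℝ)
    (ha : ∀ k, 0 < a k) (a0 : ℝ) (ha0 : a0 = ∑ k, a k) :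
    Tendsto
      (fun t : ℝ =>
        t * ((digamma (t * a0 + 1) - ∑ k, (a k / a0) * digamma (t * a k + 1))
          - (-∑ k, (a k / a0) * Real.log (a k / a0) - ((K : ℝ) - 1) / (2 * t * a0))))
      atTop (nhds 0) := by
  have : NeZero K := ⟨by omega⟩
  have ha0pos : 0 < a0 := ha0 ▸ Finset.sum_pos (fun k _ => ha k) univ_nonempty
  have hremainders : Tendsto (fun t => t * digammaRemainder (t * a0)
      - ∑ k, (a k / a0) * (t * digammaRemainder (t * a k))) atTop (nhds 0) := by
    simpa using (tendsto_mul_digammaRemainder_mul ha0pos).sub <| tendsto_finsetSum _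
      fun k _ => (tendsto_mul_digammaRemainder_mul (ha k)).const_mul (a k / a0)
  refine hremainders.congr' ?_
  filter_upwards [eventually_gt_atTop 0] with t ht
  have hidentity := digamma_entropy_sub_plugin_entropy_eq ha ha0 ht
  rw [Fintype.card_fin] at hidentity
  rw [hidentity, mul_sub, Finset.mul_sum]
  simp only [mul_left_comm]
end

section
/- For all real numbers a > 0 and b > 0, (Γ(a+b)/(Γ(a)Γ(b))) · ∫_0^1 x^{a−1} (1−x)^{b−1} · (−x log x − (1−x) log(1−x)) dx = ψ(a+b+1) − (a/(a+b))·ψ(a+1) − (b/(a+b))·ψ(b+1), where the integral is with respect to Lebesgue measure on (0,1). -/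
open Real MeasureTheory

/-!
With `B(p, q) = Γ(p)Γ(q)/Γ(p + q) = ∫₀¹ x^(p-1) (1-x)^(q-1) dx`, differentiating under the
integral sign in `p` gives `∫₀¹ x^(p-1) (1-x)^(q-1) log x dx = B(p, q) (ψ(p) - ψ(p + q))`.
Taken at `p = a + 1` and combined with `B(a + 1, b) = a/(a + b) · B(a, b)`, this evaluates the
`-x log x` part of the entropy; the reflection `x ↦ 1 - x` turns the `-(1 - x) log (1 - x)` part
into the same integral with `a` and `b` exchanged.
-/

open Set ProbabilityTheory

section Reflection

variable {E : Type*} [NormedAddCommGroup E] {f : ℝ → E}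

lemma MeasureTheory.IntegrableOn.comp_one_sub_Ioo (hf : IntegrableOn f (Ioo 0 1)) :
    IntegrableOn (fun x => f (1 - x)) (Ioo 0 1) := by
  rw [← intervalIntegrable_iff_integrableOn_Ioo_of_le zero_le_one] at hf ⊢
  simpa using (hf.comp_sub_left 1).symm

lemma setIntegral_Ioo_comp_one_sub [NormedSpace ℝ E] (f : ℝ → E) :
    ∫ x in Ioo 0 1, f (1 - x) = ∫ x in Ioo 0 1, f x := by
  simp only [← integral_Ioc_eq_integral_Ioo, ← intervalIntegral.integral_of_le zero_le_one,
    intervalIntegral.integral_comp_sub_left, sub_self, sub_zero]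

end Reflection

lemma rpow_mul_abs_log_le {x s ε : ℝ} (hx₀ : 0 < x) (hx₁ : x ≤ 1) (hε : 0 < ε) :
    x ^ s * |log x| ≤ x ^ (s - ε) / ε := by
  have h := (abs_log_mul_self_rpow_lt x ε hx₀ hx₁ hε).le
  rw [abs_mul, abs_of_pos (rpow_pos_of_pos hx₀ ε)] at h
  calc x ^ s * |log x| = x ^ (s - ε) * (|log x| * x ^ ε) := by
        rw [mul_left_comm, ← rpow_add hx₀, sub_add_cancel, mul_comm]
    _ ≤ x ^ (s - ε) * (1 / ε) := by gcongr
    _ = x ^ (s - ε) / ε := mul_one_div _ _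

lemma integrableOn_rpow_mul_one_sub_rpow {p q : ℝ} (hp : 0 < p) (hq : 0 < q) :
    IntegrableOn (fun x : ℝ => x ^ (p - 1) * (1 - x) ^ (q - 1)) (Ioo 0 1) := by
  have hc := (Complex.betaIntegral_convergent (u := p) (v := q)
    (by simpa using hp) (by simpa using hq)).norm
  rw [intervalIntegrable_iff_integrableOn_Ioo_of_le zero_le_one] at hc
  refine hc.congr_fun (fun x ⟨hx₀, hx₁⟩ => ?_) measurableSet_Ioo
  dsimp only
  have h₁ : (1 : ℂ) - x = ((1 - x : ℝ) : ℂ) := by push_cast; ring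
  rw [norm_mul, Complex.norm_cpow_eq_rpow_re_of_pos hx₀, h₁,
    Complex.norm_cpow_eq_rpow_re_of_pos (sub_pos.2 hx₁)]
  simp

lemma integral_rpow_mul_one_sub_rpow {p q : ℝ} (hp : 0 < p) (hq : 0 < q) :
    ∫ x in Ioo 0 1, x ^ (p - 1) * (1 - x) ^ (q - 1) = beta p q := by
  have h : Complex.betaIntegral p q
      = ((∫ x in (0 : ℝ)..1, x ^ (p - 1) * (1 - x) ^ (q - 1) : ℝ) : ℂ) := by
    rw [Complex.betaIntegral, ← intervalIntegral.integral_ofReal]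
    refine intervalIntegral.integral_congr fun x hx => ?_
    rw [uIcc_of_le zero_le_one] at hx
    push_cast
    rw [Complex.ofReal_cpow hx.1, Complex.ofReal_cpow (sub_nonneg.2 hx.2)]
    push_cast
    ring
  rw [beta_eq_betaIntegralReal p q hp hq, h, Complex.ofReal_re,
    intervalIntegral.integral_of_le zero_le_one, integral_Ioc_eq_integral_Ioo]

lemma beta_comm (p q : ℝ) : beta p q = beta q p := by
  rw [beta, beta, mul_comm, add_comm]

lemma beta_add_one_left {p q : ℝ} (hp : 0 < p) (hq : 0 < q) :
    beta (p + 1) q = p / (p + q) * beta p q := by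
  have hpq : p + q ≠ 0 := (add_pos hp hq).ne'
  rw [beta, beta, add_right_comm, Gamma_add_one hp.ne', Gamma_add_one hpq]
  field_simp [(Gamma_pos_of_pos (add_pos hp hq)).ne']

lemma hasDerivAt_Gamma_mul_digamma {p : ℝ} (hp : 0 < p) :
    HasDerivAt Gamma (Gamma p * digamma p) p := by
  have hΓ : HasDerivAt Gamma (deriv Gamma p) p :=
    (differentiableAt_Gamma fun m => by linarith [m.cast_nonneg (α := ℝ)]).hasDerivAt
  have hlog := (hasDerivAt_log (Gamma_pos_of_pos hp).ne').comp p hΓ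
  rw [show digamma p = _ from hlog.deriv, ← mul_assoc,
    mul_inv_cancel₀ (Gamma_pos_of_pos hp).ne', one_mul]
  exact hΓ

lemma hasDerivAt_beta_left {p q : ℝ} (hp : 0 < p) (hq : 0 < q) :
    HasDerivAt (fun t => beta t q) (beta p q * (digamma p - digamma (p + q))) p := by
  have hpq : 0 < p + q := add_pos hp hq
  have hnum := (hasDerivAt_Gamma_mul_digamma hp).mul_const (Gamma q)
  have hden := (hasDerivAt_Gamma_mul_digamma hpq).comp_add_const p q
  have hΓ := (Gamma_pos_of_pos hpq).ne'
  refine (hnum.div hden hΓ).congr_deriv ?_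
  rw [beta]
  field_simp

lemma hasDerivAt_integral_rpow_mul_one_sub_rpow {p q : ℝ} (hp : 0 < p) (hq : 0 < q) :
    IntegrableOn (fun x : ℝ => x ^ (p - 1) * (1 - x) ^ (q - 1) * log x) (Ioo 0 1) ∧
      HasDerivAt (fun t => ∫ x in Ioo 0 1, x ^ (t - 1) * (1 - x) ^ (q - 1))
        (∫ x in Ioo 0 1, x ^ (p - 1) * (1 - x) ^ (q - 1) * log x) p := by
  refine hasDerivAt_integral_of_dominated_loc_of_deriv_le
    (μ := volume.restrict (Ioo 0 1))
    (F := fun t x => x ^ (t - 1) * (1 - x) ^ (q - 1))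
    (F' := fun t x => x ^ (t - 1) * (1 - x) ^ (q - 1) * log x)
    (bound := fun x => x ^ (p / 4 - 1) * (1 - x) ^ (q - 1) * (4 / p))
    (Metric.ball_mem_nhds p (half_pos hp)) (.of_forall fun t => by fun_prop)
    (integrableOn_rpow_mul_one_sub_rpow hp hq) (by fun_prop) ?_
    ((integrableOn_rpow_mul_one_sub_rpow (by positivity) hq).mul_const _) ?_
  · filter_upwards [ae_restrict_mem measurableSet_Ioo] with x hx t ht
    obtain ⟨hx₀, hx₁⟩ := hx
    have ht : p / 2 < t := by linarith [(abs_lt.mp (Metric.mem_ball.mp ht)).1]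
    calc ‖x ^ (t - 1) * (1 - x) ^ (q - 1) * log x‖
        = x ^ (t - 1) * |log x| * (1 - x) ^ (q - 1) := by
          rw [norm_mul, norm_mul, norm_of_nonneg (by positivity),
            norm_of_nonneg (by positivity), norm_eq_abs]
          ring
      _ ≤ x ^ (t - 1 - p / 4) / (p / 4) * (1 - x) ^ (q - 1) := by
          gcongr
          exact rpow_mul_abs_log_le hx₀ hx₁.le (by positivity)
      _ ≤ x ^ (p / 4 - 1) / (p / 4) * (1 - x) ^ (q - 1) := by
          gcongr ?_ / _ * _
          exact rpow_le_rpow_of_exponent_ge hx₀ hx₁.le (by linarith)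
      _ = x ^ (p / 4 - 1) * (1 - x) ^ (q - 1) * (4 / p) := by ring
  · filter_upwards [ae_restrict_mem measurableSet_Ioo] with x hx t _
    have := ((hasStrictDerivAt_const_rpow hx.1 (t - 1)).hasDerivAt.comp t
      ((hasDerivAt_id t).sub_const 1)).mul_const ((1 - x) ^ (q - 1))
    exact this.congr_deriv (by ring)

lemma integral_rpow_mul_one_sub_rpow_mul_log {p q : ℝ} (hp : 0 < p) (hq : 0 < q) :
    ∫ x in Ioo 0 1, x ^ (p - 1) * (1 - x) ^ (q - 1) * log x
      = beta p q * (digamma p - digamma (p + q)) := by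
  have hbeta : (fun t => ∫ x in Ioo 0 1, x ^ (t - 1) * (1 - x) ^ (q - 1)) =ᶠ[nhds p]
      fun t => beta t q := by
    filter_upwards [Ioi_mem_nhds hp] with t ht
    exact integral_rpow_mul_one_sub_rpow ht hq
  exact ((hasDerivAt_integral_rpow_mul_one_sub_rpow hp hq).2.congr_of_eventuallyEq
    hbeta.symm).unique (hasDerivAt_beta_left hp hq)

lemma rpow_mul_one_sub_rpow_mul_neg_mul_log {p q x : ℝ} (hx : 0 < x) :
    x ^ (p - 1) * (1 - x) ^ (q - 1) * (-x * log x)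
      = -(x ^ (p + 1 - 1) * (1 - x) ^ (q - 1) * log x) := by
  rw [add_sub_cancel_right, rpow_sub_one hx.ne']
  field_simp

lemma integrableOn_rpow_mul_one_sub_rpow_mul_neg_mul_log {p q : ℝ} (hp : 0 < p) (hq : 0 < q) :
    IntegrableOn (fun x : ℝ => x ^ (p - 1) * (1 - x) ^ (q - 1) * (-x * log x)) (Ioo 0 1) :=
  (hasDerivAt_integral_rpow_mul_one_sub_rpow (by positivity) hq).1.neg.congr_fun
    (fun _ hx => (rpow_mul_one_sub_rpow_mul_neg_mul_log hx.1).symm) measurableSet_Ioo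

lemma integral_rpow_mul_one_sub_rpow_mul_neg_mul_log {p q : ℝ} (hp : 0 < p) (hq : 0 < q) :
    ∫ x in Ioo 0 1, x ^ (p - 1) * (1 - x) ^ (q - 1) * (-x * log x)
      = p / (p + q) * beta p q * (digamma (p + q + 1) - digamma (p + 1)) := by
  rw [setIntegral_congr_fun measurableSet_Ioo
      (fun _ hx => rpow_mul_one_sub_rpow_mul_neg_mul_log hx.1), integral_neg,
    integral_rpow_mul_one_sub_rpow_mul_log (by positivity) hq, beta_add_one_left hp hq,
    add_right_comm]
  ring

/-- expected Shannon entropy of a Bernoulli parameter under a Beta prior. -/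
theorem beta_expected_entropy (a b : ℝ) (ha : 0 < a) (hb : 0 < b) :
    (Real.Gamma (a + b) / (Real.Gamma a * Real.Gamma b)) *
      ∫ x in Set.Ioo (0 : ℝ) 1,
        x ^ (a - 1) * (1 - x) ^ (b - 1) * (-x * Real.log x - (1 - x) * Real.log (1 - x))
      = digamma (a + b + 1) - (a / (a + b)) * digamma (a + 1)
          - (b / (a + b)) * digamma (b + 1) := by
  set f : ℝ → ℝ → ℝ → ℝ := fun p q x => x ^ (p - 1) * (1 - x) ^ (q - 1) * (-x * log x)
  have hsplit : ∀ x, x ^ (a - 1) * (1 - x) ^ (b - 1) *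
      (-x * log x - (1 - x) * log (1 - x)) = f a b x + f b a (1 - x) := fun x => by
    simp only [f, sub_sub_cancel]
    ring
  simp only [hsplit]
  rw [integral_add (integrableOn_rpow_mul_one_sub_rpow_mul_neg_mul_log ha hb)
      (integrableOn_rpow_mul_one_sub_rpow_mul_neg_mul_log hb ha).comp_one_sub_Ioo,
    setIntegral_Ioo_comp_one_sub (f b a), integral_rpow_mul_one_sub_rpow_mul_neg_mul_log ha hb,
    integral_rpow_mul_one_sub_rpow_mul_neg_mul_log hb ha, beta_comm b a, add_comm b a]
  have hab : a + b ≠ 0 := (add_pos ha hb).ne'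
  rw [← inv_div, ← beta, inv_mul_eq_div, div_eq_iff (beta_pos ha hb).ne']
  field_simp
  ring
end

section
/- Define for α > 0 the BDeu Bayes factor of Example 1, F(α) = ( (Γ(α/8)/Γ(α/8 + 3)) · (Γ(α/16 + 3)/Γ(α/16)) )^4 / ( (Γ(α/4)/Γ(α/4 + 3)) · (Γ(α/8 + 3)/Γ(α/8)) )^4. Then F(α) → 1 as α → 0⁺. -/
open Real Filter

lemma gamma_add_three (x : ℝ) (hx : 0 < x) :
    Real.Gamma (x + 3) = (x + 2) * (x + 1) * x * Real.Gamma x := by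
  rw [show x + 3 = (x + 2) + 1 by ring, Real.Gamma_add_one (by linarith),
    show x + 2 = (x + 1) + 1 by ring, Real.Gamma_add_one (by linarith),
    Real.Gamma_add_one hx.ne']
  ring

/-- the BDeu Bayes factor of Example 1 tends to 1 as `α → 0⁺`. -/
theorem bdeu_bayes_factor_tendsto_one_at_zero :
    Tendsto
      (fun α : ℝ =>
        ((Real.Gamma (α/8) / Real.Gamma (α/8 + 3)) *
          (Real.Gamma (α/16 + 3) / Real.Gamma (α/16))) ^ 4 /
        ((Real.Gamma (α/4) / Real.Gamma (α/4 + 3)) *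
          (Real.Gamma (α/8 + 3) / Real.Gamma (α/8))) ^ 4)
      (nhdsWithin 0 (Set.Ioi 0)) (nhds 1) := by
  set g : ℝ → ℝ := fun α =>
    (((α/16 + 2) * (α/16 + 1) * ((α/4 + 2) * (α/4 + 1))) /
      ((α/8 + 2) * (α/8 + 1)) ^ 2) ^ 4 with hg
  have hgt : Tendsto g (nhdsWithin 0 (Set.Ioi 0)) (nhds 1) := by
    have hc : ContinuousAt g 0 := by
      apply ContinuousAt.pow
      apply ContinuousAt.div
      · fun_prop
      · fun_prop
      · norm_num
    have h0 : g 0 = 1 := by simp [hg]; norm_num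
    exact h0 ▸ hc.continuousWithinAt.tendsto
  refine Tendsto.congr' ?_ hgt
  filter_upwards [self_mem_nhdsWithin] with α (hα : 0 < α)
  have h8 : (0:ℝ) < α/8 := by linarith
  have h16 : (0:ℝ) < α/16 := by linarith
  have h4 : (0:ℝ) < α/4 := by linarith
  have G8 := Real.Gamma_pos_of_pos h8
  have G16 := Real.Gamma_pos_of_pos h16
  have G4 := Real.Gamma_pos_of_pos h4
  rw [hg]
  simp only
  rw [gamma_add_three _ h8, gamma_add_three _ h16, gamma_add_three _ h4]
  have p8a : (0:ℝ) < α/8 + 2 := by linarith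
  have p8b : (0:ℝ) < α/8 + 1 := by linarith
  have p16a : (0:ℝ) < α/16 + 2 := by linarith
  have p16b : (0:ℝ) < α/16 + 1 := by linarith
  have p4a : (0:ℝ) < α/4 + 2 := by linarith
  have p4b : (0:ℝ) < α/4 + 1 := by linarith
  field_simp
  ring
end

section
/- The following inequality holds: 4·(ψ(17/4) − (1/26)·ψ(9/8) − (25/26)·ψ(33/8)) · ( Γ(1/4)·Γ(25/8) / (Γ(13/4)·Γ(1/8)) )^4 < ( 4·(ψ(33/8) − (1/50)·ψ(17/16) − (49/50)·ψ(65/16)) + 4·(ψ(9/8) − ψ(17/16)) ) · ( Γ(1/8)·Γ(49/16) / (Γ(25/8)·Γ(1/16)) )^4. Consequently, in Example 1 of the paper with α = 1, the BDeu posterior expected entropy of G⁺, E(H^{G⁺}(X) | D), strictly exceeds that of G⁻, E(H^{G⁻}(X) | D), so the maximum relative entropy criterion under the BDeu prior selects the larger DAG G⁺ even though the data contribute identical information to both models. -/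
open Real

namespace BdeuAux

open Set

lemma digamma_eq (x : ℝ) : digamma x = deriv (Real.log ∘ Real.Gamma) x := rfl

lemma ne_neg_nat {x : ℝ} (hx : 0 < x) : ∀ m : ℕ, x ≠ -m := by
  intro m h
  have : (0:ℝ) ≤ (m:ℝ) := Nat.cast_nonneg m
  rw [h] at hx; linarith

lemma hder {x : ℝ} (hx : 0 < x) : DifferentiableAt ℝ (Real.log ∘ Real.Gamma) x :=
  (Real.differentiableAt_Gamma (ne_neg_nat hx)).log (Real.Gamma_ne_zero (ne_neg_nat hx))

lemma h_rec {x : ℝ} (hx : 0 < x) :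
    (Real.log ∘ Real.Gamma) (x + 1) = (Real.log ∘ Real.Gamma) x + Real.log x := by
  simp only [Function.comp_apply, Real.Gamma_add_one hx.ne',
    Real.log_mul hx.ne' (Real.Gamma_pos_of_pos hx).ne', add_comm]

lemma digamma_add_one {x : ℝ} (hx : 0 < x) : digamma (x + 1) = digamma x + 1 / x := by
  rw [digamma_eq, digamma_eq, ← deriv_comp_add_const, one_div, ← Real.deriv_log,
    ← deriv_add (hder hx) (Real.differentiableAt_log hx.ne')]
  apply Filter.EventuallyEq.deriv_eq
  filter_upwards [eventually_gt_nhds hx] using fun y hy => h_rec hy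

lemma digamma_shift (x : ℝ) (hx : 0 < x) (n : ℕ) :
    digamma (x + n) = digamma x + ∑ k ∈ Finset.range n, (1:ℝ) / (x + (k:ℝ)) := by
  induction n with
  | zero => simp
  | succ n ih =>
    have hxn : 0 < x + (n:ℝ) := by
      have : (0:ℝ) ≤ (n:ℝ) := Nat.cast_nonneg n
      linarith
    have h : x + ((n+1 : ℕ):ℝ) = (x + (n:ℝ)) + 1 := by push_cast; ring
    rw [h, digamma_add_one hxn, ih, Finset.sum_range_succ]
    ring

lemma digamma_le_log {x : ℝ} (hx : 0 < x) : digamma x ≤ Real.log x := by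
  have h := Real.convexOn_log_Gamma.deriv_le_slope (mem_Ioi.mpr hx)
    (mem_Ioi.mpr (by linarith : (0:ℝ) < x + 1)) (by linarith) (hder hx)
  rw [slope_def_field, show x + 1 - x = (1:ℝ) by ring, div_one, h_rec hx,
    add_sub_cancel_left] at h
  exact h

lemma log_le_digamma_succ {x : ℝ} (hx : 0 < x) : Real.log x ≤ digamma (x + 1) := by
  have h := Real.convexOn_log_Gamma.slope_le_deriv (mem_Ioi.mpr hx)
    (mem_Ioi.mpr (by linarith : (0:ℝ) < x + 1)) (by linarith) (hder (by linarith))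
  rw [slope_def_field, show x + 1 - x = (1:ℝ) by ring, div_one, h_rec hx,
    add_sub_cancel_left] at h
  exact h

lemma log_sub_le_digamma {x : ℝ} (hx : 0 < x) : Real.log x - 1 / x ≤ digamma x := by
  have h1 := log_le_digamma_succ hx
  have h2 := digamma_add_one hx
  linarith

end BdeuAux

open BdeuAux Set

set_option maxHeartbeats 4000000 in
/-- in Example 1 with `α = 1`, the BDeu posterior expected entropy of `G⁺`
strictly exceeds that of `G⁻`. -/
theorem bdeu_example1_entropy_prefers_larger :
    4 * (digamma (17/4) - (1/26) * digamma (9/8) - (25/26) * digamma (33/8)) *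
        (Real.Gamma (1/4) * Real.Gamma (25/8) / (Real.Gamma (13/4) * Real.Gamma (1/8))) ^ 4
      < (4 * (digamma (33/8) - (1/50) * digamma (17/16) - (49/50) * digamma (65/16))
          + 4 * (digamma (9/8) - digamma (17/16))) *
        (Real.Gamma (1/8) * Real.Gamma (49/16) / (Real.Gamma (25/8) * Real.Gamma (1/16))) ^ 4 := by
  -- Gamma values at shifted points
  have hne4 : Real.Gamma (1/4) ≠ 0 := (Real.Gamma_pos_of_pos (by norm_num)).ne'
  have hne8 : Real.Gamma (1/8) ≠ 0 := (Real.Gamma_pos_of_pos (by norm_num)).ne'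
  have hne16 : Real.Gamma (1/16) ≠ 0 := (Real.Gamma_pos_of_pos (by norm_num)).ne'
  have g54 : Real.Gamma (5/4) = 1/4 * Real.Gamma (1/4) := by
    rw [show (5/4:ℝ) = 1/4 + 1 by norm_num, Real.Gamma_add_one (by norm_num)]
  have g94 : Real.Gamma (9/4) = 5/4 * Real.Gamma (5/4) := by
    rw [show (9/4:ℝ) = 5/4 + 1 by norm_num, Real.Gamma_add_one (by norm_num)]
  have g134 : Real.Gamma (13/4) = 45/64 * Real.Gamma (1/4) := by
    rw [show (13/4:ℝ) = 9/4 + 1 by norm_num, Real.Gamma_add_one (by norm_num), g94, g54]; ring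
  have g98 : Real.Gamma (9/8) = 1/8 * Real.Gamma (1/8) := by
    rw [show (9/8:ℝ) = 1/8 + 1 by norm_num, Real.Gamma_add_one (by norm_num)]
  have g178 : Real.Gamma (17/8) = 9/8 * Real.Gamma (9/8) := by
    rw [show (17/8:ℝ) = 9/8 + 1 by norm_num, Real.Gamma_add_one (by norm_num)]
  have g258 : Real.Gamma (25/8) = 153/512 * Real.Gamma (1/8) := by
    rw [show (25/8:ℝ) = 17/8 + 1 by norm_num, Real.Gamma_add_one (by norm_num), g178, g98]; ring
  have g1716 : Real.Gamma (17/16) = 1/16 * Real.Gamma (1/16) := by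
    rw [show (17/16:ℝ) = 1/16 + 1 by norm_num, Real.Gamma_add_one (by norm_num)]
  have g3316 : Real.Gamma (33/16) = 17/16 * Real.Gamma (17/16) := by
    rw [show (33/16:ℝ) = 17/16 + 1 by norm_num, Real.Gamma_add_one (by norm_num)]
  have g4916 : Real.Gamma (49/16) = 561/4096 * Real.Gamma (1/16) := by
    rw [show (49/16:ℝ) = 33/16 + 1 by norm_num, Real.Gamma_add_one (by norm_num), g3316, g1716]
    ring
  have hR1 : Real.Gamma (1/4) * Real.Gamma (25/8) / (Real.Gamma (13/4) * Real.Gamma (1/8))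
      = 17/40 := by
    rw [g134, g258]; field_simp; ring
  have hR2 : Real.Gamma (1/8) * Real.Gamma (49/16) / (Real.Gamma (25/8) * Real.Gamma (1/16))
      = 11/24 := by
    rw [g258, g4916]; field_simp; ring
  rw [hR1, hR2]
  rw [show ((17:ℝ)/40)^4 = 83521/2560000 by norm_num,
      show ((11:ℝ)/24)^4 = 14641/331776 by norm_num]
  -- digamma shift relations
  have h1 := digamma_shift (17/4) (by norm_num) 60
  rw [show (17/4:ℝ) + ((60:ℕ):ℝ) = 257/4 by norm_num] at h1
  have h2 := digamma_shift (33/8) (by norm_num) 60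
  rw [show (33/8:ℝ) + ((60:ℕ):ℝ) = 513/8 by norm_num] at h2
  have h3 := digamma_shift (65/16) (by norm_num) 60
  rw [show (65/16:ℝ) + ((60:ℕ):ℝ) = 1025/16 by norm_num] at h3
  have h4 := digamma_shift (17/16) (by norm_num) 63
  rw [show (17/16:ℝ) + ((63:ℕ):ℝ) = 1025/16 by norm_num] at h4
  have h5 := digamma_shift (9/8) (by norm_num) 63
  rw [show (9/8:ℝ) + ((63:ℕ):ℝ) = 513/8 by norm_num] at h5
  -- numeric bounds for the harmonic-type sums
  have hS1l : (2.8302962:ℝ) < ∑ k ∈ Finset.range 60, (1:ℝ) / (17/4 + (k:ℝ)) := by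
    simp only [Finset.sum_range_succ, Finset.sum_range_zero]; norm_num
  have hS1u : (∑ k ∈ Finset.range 60, (1:ℝ) / (17/4 + (k:ℝ))) < 2.8302963 := by
    simp only [Finset.sum_range_succ, Finset.sum_range_zero]; norm_num
  have hS2l : (2.8620323:ℝ) < ∑ k ∈ Finset.range 60, (1:ℝ) / (33/8 + (k:ℝ)) := by
    simp only [Finset.sum_range_succ, Finset.sum_range_zero]; norm_num
  have hS2u : (∑ k ∈ Finset.range 60, (1:ℝ) / (33/8 + (k:ℝ))) < 2.8620324 := by
    simp only [Finset.sum_range_succ, Finset.sum_range_zero]; norm_num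
  have hS3l : (2.8783319:ℝ) < ∑ k ∈ Finset.range 60, (1:ℝ) / (65/16 + (k:ℝ)) := by
    simp only [Finset.sum_range_succ, Finset.sum_range_zero]; norm_num
  have hS3u : (∑ k ∈ Finset.range 60, (1:ℝ) / (65/16 + (k:ℝ))) < 2.8783320 := by
    simp only [Finset.sum_range_succ, Finset.sum_range_zero]; norm_num
  have hS4l : (4.6308874:ℝ) < ∑ k ∈ Finset.range 63, (1:ℝ) / (17/16 + (k:ℝ)) := by
    simp only [Finset.sum_range_succ, Finset.sum_range_zero]; norm_num
  have hS4u : (∑ k ∈ Finset.range 63, (1:ℝ) / (17/16 + (k:ℝ))) < 4.6308875 := by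
    simp only [Finset.sum_range_succ, Finset.sum_range_zero]; norm_num
  have hS5l : (4.5415094:ℝ) < ∑ k ∈ Finset.range 63, (1:ℝ) / (9/8 + (k:ℝ)) := by
    simp only [Finset.sum_range_succ, Finset.sum_range_zero]; norm_num
  have hS5u : (∑ k ∈ Finset.range 63, (1:ℝ) / (9/8 + (k:ℝ))) < 4.5415095 := by
    simp only [Finset.sum_range_succ, Finset.sum_range_zero]; norm_num
  -- bounds on digamma at the large points, in terms of log 2
  -- C = digamma (257/4), with 257/4 = 2^6 * (257/256)
  have hlogC : Real.log (257/4) = 6 * Real.log 2 + Real.log (257/256) := by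
    rw [show (257/4:ℝ) = 2^6 * (257/256) by norm_num,
      Real.log_mul (by positivity) (by norm_num), Real.log_pow]
    push_cast; ring
  have hlogB : Real.log (513/8) = 6 * Real.log 2 + Real.log (513/512) := by
    rw [show (513/8:ℝ) = 2^6 * (513/512) by norm_num,
      Real.log_mul (by positivity) (by norm_num), Real.log_pow]
    push_cast; ring
  have hlogA : Real.log (1025/16) = 6 * Real.log 2 + Real.log (1025/1024) := by
    rw [show (1025/16:ℝ) = 2^6 * (1025/1024) by norm_num,
      Real.log_mul (by positivity) (by norm_num), Real.log_pow]
    push_cast; ring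
  have hcCu : Real.log (257/256) ≤ 1/256 := by
    have := Real.log_le_sub_one_of_pos (show (0:ℝ) < 257/256 by norm_num); linarith
  have hcCl : (1:ℝ)/257 ≤ Real.log (257/256) := by
    have h := Real.log_le_sub_one_of_pos (show (0:ℝ) < 256/257 by norm_num)
    rw [show (256/257:ℝ) = (257/256)⁻¹ by norm_num, Real.log_inv] at h; linarith
  have hcBu : Real.log (513/512) ≤ 1/512 := by
    have := Real.log_le_sub_one_of_pos (show (0:ℝ) < 513/512 by norm_num); linarith
  have hcBl : (1:ℝ)/513 ≤ Real.log (513/512) := by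
    have h := Real.log_le_sub_one_of_pos (show (0:ℝ) < 512/513 by norm_num)
    rw [show (512/513:ℝ) = (513/512)⁻¹ by norm_num, Real.log_inv] at h; linarith
  have hcAu : Real.log (1025/1024) ≤ 1/1024 := by
    have := Real.log_le_sub_one_of_pos (show (0:ℝ) < 1025/1024 by norm_num); linarith
  have hcAl : (1:ℝ)/1025 ≤ Real.log (1025/1024) := by
    have h := Real.log_le_sub_one_of_pos (show (0:ℝ) < 1024/1025 by norm_num)
    rw [show (1024/1025:ℝ) = (1025/1024)⁻¹ by norm_num, Real.log_inv] at h; linarith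
  have hCu : digamma (257/4) ≤ Real.log (257/4) := digamma_le_log (by norm_num)
  have hCl : Real.log (257/4) - 4/257 ≤ digamma (257/4) := by
    have := log_sub_le_digamma (show (0:ℝ) < 257/4 by norm_num)
    rw [show (1:ℝ)/(257/4) = 4/257 by norm_num] at this; exact this
  have hBu : digamma (513/8) ≤ Real.log (513/8) := digamma_le_log (by norm_num)
  have hBl : Real.log (513/8) - 8/513 ≤ digamma (513/8) := by
    have := log_sub_le_digamma (show (0:ℝ) < 513/8 by norm_num)
    rw [show (1:ℝ)/(513/8) = 8/513 by norm_num] at this; exact this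
  have hAu : digamma (1025/16) ≤ Real.log (1025/16) := digamma_le_log (by norm_num)
  have hAl : Real.log (1025/16) - 16/1025 ≤ digamma (1025/16) := by
    have := log_sub_le_digamma (show (0:ℝ) < 1025/16 by norm_num)
    rw [show (1:ℝ)/(1025/16) = 16/1025 by norm_num] at this; exact this
  linarith
end

section
/- The following inequality between products of Gamma function values holds: ( (Γ(1/4)/Γ(1/4 + 3)) · (Γ(1/8 + 2)/Γ(1/8)) · (Γ(1/8 + 1)/Γ(1/8)) )^4 > ( (Γ(1/8)/Γ(1/8 + 3)) · (Γ(1/16 + 2)/Γ(1/16)) · (Γ(1/16 + 1)/Γ(1/16)) )^4. Consequently, in Example 2 of the paper, BDeu with imaginary sample size α = 1 assigns a strictly higher score to G⁻ than to G⁺, even though the observed conditional distributions of X given its parents coincide under the two DAGs. -/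
open Real

/-- BDeu with `α = 1` prefers `G⁻` over `G⁺` in Example 2. -/
theorem bdeu_example2_prefers_smaller :
    ((Real.Gamma (1/4) / Real.Gamma (1/4 + 3)) *
        (Real.Gamma (1/8 + 2) / Real.Gamma (1/8)) *
        (Real.Gamma (1/8 + 1) / Real.Gamma (1/8))) ^ 4
      > ((Real.Gamma (1/8) / Real.Gamma (1/8 + 3)) *
        (Real.Gamma (1/16 + 2) / Real.Gamma (1/16)) *
        (Real.Gamma (1/16 + 1) / Real.Gamma (1/16))) ^ 4 := by
  have p4 : (0:ℝ) < Real.Gamma (1/4) := Real.Gamma_pos_of_pos (by norm_num)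
  have p8 : (0:ℝ) < Real.Gamma (1/8) := Real.Gamma_pos_of_pos (by norm_num)
  have p16 : (0:ℝ) < Real.Gamma (1/16) := Real.Gamma_pos_of_pos (by norm_num)
  have h4 : Real.Gamma (1/4 + 3) = (1/4+2)*((1/4+1)*((1/4)*Real.Gamma (1/4))) := by
    rw [show (1/4+3:ℝ) = (1/4+2)+1 by ring, Real.Gamma_add_one (by norm_num),
        show (1/4+2:ℝ) = (1/4+1)+1 by ring, Real.Gamma_add_one (by norm_num),
        Real.Gamma_add_one (by norm_num)]
  have h83 : Real.Gamma (1/8 + 3) = (1/8+2)*((1/8+1)*((1/8)*Real.Gamma (1/8))) := by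
    rw [show (1/8+3:ℝ) = (1/8+2)+1 by ring, Real.Gamma_add_one (by norm_num),
        show (1/8+2:ℝ) = (1/8+1)+1 by ring, Real.Gamma_add_one (by norm_num),
        Real.Gamma_add_one (by norm_num)]
  have h82 : Real.Gamma (1/8 + 2) = (1/8+1)*((1/8)*Real.Gamma (1/8)) := by
    rw [show (1/8+2:ℝ) = (1/8+1)+1 by ring, Real.Gamma_add_one (by norm_num),
        Real.Gamma_add_one (by norm_num)]
  have h81 : Real.Gamma (1/8 + 1) = (1/8)*Real.Gamma (1/8) :=
    Real.Gamma_add_one (by norm_num)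
  have h162 : Real.Gamma (1/16 + 2) = (1/16+1)*((1/16)*Real.Gamma (1/16)) := by
    rw [show (1/16+2:ℝ) = (1/16+1)+1 by ring, Real.Gamma_add_one (by norm_num),
        Real.Gamma_add_one (by norm_num)]
  have h161 : Real.Gamma (1/16 + 1) = (1/16)*Real.Gamma (1/16) :=
    Real.Gamma_add_one (by norm_num)
  have eL : ((Real.Gamma (1/4) / Real.Gamma (1/4 + 3)) *
        (Real.Gamma (1/8 + 2) / Real.Gamma (1/8)) *
        (Real.Gamma (1/8 + 1) / Real.Gamma (1/8))) = 1/40 := by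
    rw [h4, h82, h81]
    field_simp
    ring
  have eR : ((Real.Gamma (1/8) / Real.Gamma (1/8 + 3)) *
        (Real.Gamma (1/16 + 2) / Real.Gamma (1/16)) *
        (Real.Gamma (1/16 + 1) / Real.Gamma (1/16))) = 1/72 := by
    rw [h83, h162, h161]
    field_simp
    ring
  rw [eL, eR]
  norm_num
end
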